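/- arXiv:1611.05422 — 2 statements merged into one kernel-verified Lean document; each statement's English description precedes it below -/
import Mathlib

section
/- Let R be a valuation ring with fraction field K, and let I be an ideal of the polynomial ring R[X₁,...,Xₙ]. If R[X₁,...,Xₙ]/I is flat over R, then I = (I·K[X₁,...,Xₙ]) ∩ R[X₁,...,Xₙ]. -/
/-- A flat module over a domain is torsion-free. -/
lemma flat_isSMulRegular_aux {R M : Type*} [CommRing R] [IsDomain R] [AddCommGroup M]
    [Module R M] [Module.Flat R M] {r : R} (hr : r ≠ 0) : IsSMulRegular M r := by
  have hR : IsSMulRegular R r := fun a b hab =>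
    mul_left_cancel₀ hr (by simpa [smul_eq_mul] using hab)
  exact ((TensorProduct.rid R M).isSMulRegular_congr r).mp (hR.lTensor M)

/-- Let `R` be a valuation ring with fraction field `K` and `I` an ideal of
`R[X₁,…,Xₙ]`.  If `R[X₁,…,Xₙ]/I` is flat over `R` then
`I = (I·K[X₁,…,Xₙ]) ∩ R[X₁,…,Xₙ]`. -/
theorem ideal_eq_comap_map_of_flat_quotient
    {R K : Type*} [CommRing R] [IsDomain R] [ValuationRing R]
    [Field K] [Algebra R K] [IsFractionRing R K]
    {n : ℕ} (I : Ideal (MvPolynomial (Fin n) R))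
    (hflat : Module.Flat R (MvPolynomial (Fin n) R ⧸ I)) :
    I = (I.map (MvPolynomial.map (algebraMap R K))).comap
        (MvPolynomial.map (algebraMap R K) :
          MvPolynomial (Fin n) R →+* MvPolynomial (Fin n) K) := by
  letI : Algebra (MvPolynomial (Fin n) R) (MvPolynomial (Fin n) K) :=
    MvPolynomial.algebraMvPolynomial
  refine le_antisymm (Ideal.le_comap_map) ?_
  intro f hf
  rw [Ideal.mem_comap] at hf
  have hloc : IsLocalization ((nonZeroDivisors R).map (MvPolynomial.C (σ := Fin n)))
      (MvPolynomial (Fin n) K) := MvPolynomial.isLocalization _ _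
  obtain ⟨⟨⟨a, ha⟩, ⟨s, hs⟩⟩, h⟩ :=
    (IsLocalization.mem_map_algebraMap_iff
      ((nonZeroDivisors R).map (MvPolynomial.C (σ := Fin n)))
      (MvPolynomial (Fin n) K)).mp hf
  obtain ⟨r, hr, rfl⟩ := hs
  have hinj : Function.Injective
      (MvPolynomial.map (algebraMap R K) : MvPolynomial (Fin n) R →+* MvPolynomial (Fin n) K) :=
    MvPolynomial.map_injective _ (IsFractionRing.injective R K)
  have key : f * MvPolynomial.C r = a := by
    apply hinj
    simpa using h
  have hmem : f * MvPolynomial.C r ∈ I := key ▸ ha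
  have hr0 : r ≠ 0 := nonZeroDivisors.ne_zero hr
  have hreg : IsSMulRegular (MvPolynomial (Fin n) R ⧸ I) r := flat_isSMulRegular_aux hr0
  have hz : r • (Ideal.Quotient.mk I f) = 0 := by
    have : r • (Ideal.Quotient.mk I f) = Ideal.Quotient.mk I (r • f) :=
      (map_smul (Ideal.Quotient.mkₐ R I) r f).symm
    rw [this, MvPolynomial.smul_eq_C_mul, mul_comm, Ideal.Quotient.eq_zero_iff_mem]
    exact hmem
  have : Ideal.Quotient.mk I f = 0 := hreg (by simpa using hz)
  rwa [Ideal.Quotient.eq_zero_iff_mem] at this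
end

section
/- Let K ⊆ L be an extension of fields, O_K a valuation ring of K, and B a subring of L containing O_K such that the ideal of B generated by the maximal ideal M_K of O_K is proper. Then there exists a valuation ring O_L of L containing B whose maximal ideal M_L satisfies M_L ∩ O_K = M_K; in particular the valuation on K extends to a valuation on L with respect to which every element of B has nonnegative valuation. -/
/-!
Enlarge the proper ideal `M_K B` to a maximal ideal `m` of `B`; by Zorn's lemma some valuation
ring `O_L` of `L` dominates the local ring `B_m`, so `M_K` lands in `M_L`. Hence `O_K → O_L` is a
local homomorphism, which is exactly `M_L ∩ O_K = M_K`.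
-/

open IsLocalRing

/-- Chevalley extension theorem: if `O_K` is a valuation ring of `K ⊆ L` and `B` a
subring of `L` containing (the image of) `O_K` such that the ideal of `B` generated
by the maximal ideal `M_K` is proper, then there is a valuation ring `O_L` of `L`
containing `B` whose maximal ideal `M_L` satisfies `M_L ∩ O_K = M_K`. -/
theorem exists_valuationSubring_extending
    {K L : Type*} [Field K] [Field L] [Algebra K L]
    (O : ValuationSubring K) (B : Subring L)
    (hOB : ∀ x : K, x ∈ O → algebraMap K L x ∈ B)
    (hproper : Ideal.span {y : B | ∃ m : O, m ∈ IsLocalRing.maximalIdeal O ∧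
      (y : L) = algebraMap K L m} ≠ ⊤) :
    ∃ OL : ValuationSubring L, ∃ hsub : (B : Set L) ⊆ (OL : Set L),
      ∀ (x : K) (hx : x ∈ O),
        ((⟨algebraMap K L x, hsub (hOB x hx)⟩ : OL) ∈ IsLocalRing.maximalIdeal OL ↔
          (⟨x, hx⟩ : O) ∈ IsLocalRing.maximalIdeal O) := by
  obtain ⟨OL, hBOL, hnonunits⟩ := Ideal.image_subset_nonunits_valuationSubring _ hproper
  have hsub : (B : Set L) ⊆ OL := hBOL
  let φ : O →+* OL := (algebraMap K L).restrict O OL fun x hx ↦ hsub (hOB x hx)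
  have : IsLocalHom φ := by
    refine ((local_hom_TFAE φ).out 1 0).mp ?_
    rintro _ ⟨m, hm, rfl⟩
    obtain ⟨_, hmOL⟩ := ValuationSubring.mem_nonunits_iff_exists_mem_maximalIdeal.mp
      (hnonunits ⟨⟨_, hOB m m.2⟩, Ideal.subset_span ⟨m, hm, rfl⟩, rfl⟩)
    exact hmOL
  exact ⟨OL, hsub, fun x hx ↦ map_mem_nonunits_iff φ ⟨x, hx⟩⟩
end
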